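/- arXiv:0910.2949 — 3 statements merged into one kernel-verified Lean document; each statement's English description precedes it below -/
import Mathlib

section
/- For every n ≥ 0, the submodule Fⁿ of E coincides with the K-span of the ordered basis monomials ℏ_{Γ₁}⋯ℏ_{Γ_k} (k ≥ 0, Γ₁ ⪰ … ⪰ Γ_k in Y⁺) satisfying Σᵢ (|Γ_i| − 1) ≥ n; moreover Fᵐ·Fⁿ ⊆ F^{m+n} for all m, n ≥ 0, so F is a decreasing algebra filtration of E. -/
open scoped Classical

noncomputable section

namespace NC

/-- Number of leaves of a planar binary tree. -/
def leaves {α : Type*} : FreeMagma α → ℕ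
  | .of _ => 1
  | .mul a b => leaves a + leaves b

/-- The list of leaf labels of a planar binary tree, read left to right. -/
def leafList {α : Type*} : FreeMagma α → List α
  | .of i => [i]
  | .mul a b => leafList a ++ leafList b

/-- Planar binary trees with leaves labelled in `Fin (2*d)`. -/
abbrev M (d : ℕ) := FreeMagma (Fin (2 * d))

/-- The strict order `≺` on labelled planar binary trees. -/
def mlt {d : ℕ} : M d → M d → Prop
  | .of i, .of j => i < j
  | .of _, .mul _ _ => True
  | .mul _ _, .of _ => False
  | .mul a b, .mul c e =>
      leaves (FreeMagma.mul a b) < leaves (FreeMagma.mul c e) ∨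
        (leaves (FreeMagma.mul a b) = leaves (FreeMagma.mul c e) ∧
          (mlt a c ∨ (a = c ∧ mlt b e)))

/-- `a ⪰ b`. -/
def mge {d : ℕ} (a b : M d) : Prop := mlt b a ∨ a = b

/-- The set `Y⁺` of admissible trees. -/
inductive Yplus {d : ℕ} : M d → Prop
  | of (i : Fin (2 * d)) : Yplus (FreeMagma.of i)
  | mul {a b : M d} : Yplus a → Yplus b → mlt a b → Yplus (a * b)

abbrev Yp (d : ℕ) := {Γ : M d // Yplus Γ}

variable {d : ℕ} {K : Type*} [CommRing K]

/-- Extension of `q` to pairs of trees. -/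
def qT (q : Fin (2 * d) → Fin (2 * d) → Kˣ) (Γ Γ' : M d) : Kˣ :=
  ((leafList Γ).map fun i => ((leafList Γ').map fun j => q i j).prod).prod

/-- Defining relations of the bracketing (epoché) algebra. -/
inductive Erel (q : Fin (2 * d) → Fin (2 * d) → Kˣ) :
    FreeAlgebra K (M d) → FreeAlgebra K (M d) → Prop
  | rel (Γ Γ' : M d) :
      Erel q (FreeAlgebra.ι K Γ * FreeAlgebra.ι K Γ')
        (((qT q Γ' Γ : Kˣ) : K) • (FreeAlgebra.ι K Γ' * FreeAlgebra.ι K Γ)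
          + FreeAlgebra.ι K (Γ * Γ'))

/-- The bracketing (epoché) algebra `E`. -/
abbrev E (q : Fin (2 * d) → Fin (2 * d) → Kˣ) := RingQuot (Erel (K := K) q)

/-- The noncommutative Planck constants `ℏ_Γ`. -/
def hbar (q : Fin (2 * d) → Fin (2 * d) → Kˣ) (Γ : M d) : E q :=
  RingQuot.mkAlgHom K (Erel q) (FreeAlgebra.ι K Γ)

/-- Defining relations of the classical shadow. -/
inductive Arel (q : Fin (2 * d) → Fin (2 * d) → Kˣ) :
    FreeAlgebra K (Yp d) → FreeAlgebra K (Yp d) → Prop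
  | rel (Γ Γ' : Yp d) :
      Arel q (FreeAlgebra.ι K Γ * FreeAlgebra.ι K Γ')
        (((qT q Γ'.1 Γ.1 : Kˣ) : K) • (FreeAlgebra.ι K Γ' * FreeAlgebra.ι K Γ))

/-- The classical shadow `A`. -/
abbrev A (q : Fin (2 * d) → Fin (2 * d) → Kˣ) := RingQuot (Arel (K := K) q)

/-- The generators `h_Γ` of the classical shadow. -/
def hA (q : Fin (2 * d) → Fin (2 * d) → Kˣ) (Γ : Yp d) : A q :=
  RingQuot.mkAlgHom K (Arel q) (FreeAlgebra.ι K Γ)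

/-- A weakly decreasing list of trees: `Γ₁ ⪰ Γ₂ ⪰ … ⪰ Γ_n`. -/
def DecChain {d : ℕ} (l : List (Yp d)) : Prop := l.Chain' fun a b => mge a.1 b.1

/-- Total degree of a list of trees. -/
def degList {d : ℕ} (l : List (M d)) : ℕ := (l.map fun Γ => leaves Γ - 1).sum

/-- The decreasing filtration `F` on `E`. -/
def Ffil (q : Fin (2 * d) → Fin (2 * d) → Kˣ) (n : ℕ) : Submodule K (E q) :=
  Submodule.span K {x | ∃ l : List (M d), n ≤ degList l ∧ x = (l.map (hbar q)).prod}

/-- Homogeneous component of degree `D` of the classical shadow. -/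
def Adeg (q : Fin (2 * d) → Fin (2 * d) → Kˣ) (D : ℕ) : Submodule K (A q) :=
  Submodule.span K {x | ∃ l : List (Yp d),
    DecChain l ∧ degList (l.map (·.1)) = D ∧ x = (l.map (hA q)).prod}

/-- The braiding coefficient `q(Γ̃, σ)`. -/
def qPerm (q : Fin (2 * d) → Fin (2 * d) → Kˣ) {n : ℕ} (Γ : Fin n → M d)
    (σ : Equiv.Perm (Fin n)) : Kˣ :=
  ∏ p ∈ Finset.univ.filter
      (fun p : Fin n × Fin n => p.1 < p.2 ∧ σ.symm p.2 < σ.symm p.1),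
    qT q (Γ p.1) (Γ p.2)

/-- The partition function `Z_n(Γ̃)`. -/
def Zfun (q : Fin (2 * d) → Fin (2 * d) → Kˣ) {n : ℕ} (Γ : Fin n → M d) : K :=
  ∑ σ : Equiv.Perm (Fin n), ((qPerm q Γ σ : Kˣ) : K) ^ 2

/-!
Straightening. The relation `ℏ_Γ ℏ_Γ' = q_{Γ',Γ} ℏ_Γ' ℏ_Γ + ℏ_{Γ*Γ'}`, together with its
consequences `ℏ_{Γ*Γ} = 0` and `ℏ_{Γ*Γ'} = -q_{Γ',Γ} ℏ_{Γ'*Γ}`, rewrites every `ℏ_Γ` as a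
combination of `ℏ_Δ` with `Δ ∈ Y⁺` having the same leaves, hence the same degree. A monomial in
admissible generators is then sorted into decreasing order: swapping an increasing adjacent pair
removes an inversion and keeps the factors, while the correction term merges two factors into one
of one degree more. Both steps decrease (number of factors, number of inversions)
lexicographically and neither lowers the degree. Degrees add under multiplication of monomials,
which gives `Fᵐ Fⁿ ⊆ F^{m+n}`.
-/

section Trees

variable {α : Type*}

@[simp] lemma leaves_mul (a b : FreeMagma α) : leaves (a * b) = leaves a + leaves b := rfl

@[simp] lemma leafList_of (i : α) : leafList (FreeMagma.of i) = [i] := rfl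

@[simp] lemma leafList_mul (a b : FreeMagma α) :
    leafList (a * b) = leafList a ++ leafList b := rfl

lemma leaves_pos (a : FreeMagma α) : 0 < leaves a := by
  induction a with
  | ih1 => exact Nat.one_pos
  | ih2 _ _ ha => exact Nat.add_pos_left ha _

lemma leaves_eq_length_leafList (a : FreeMagma α) : leaves a = (leafList a).length := by
  induction a with
  | ih1 => rfl
  | ih2 a b iha ihb => simp [iha, ihb]

lemma leaves_eq_of_perm {a b : FreeMagma α} (h : (leafList a).Perm (leafList b)) :
    leaves a = leaves b := by
  rw [leaves_eq_length_leafList, leaves_eq_length_leafList, h.length_eq]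

end Trees

section Order

lemma mlt_irrefl (a : M d) : ¬ mlt a a := by
  induction a with
  | of i => exact lt_irrefl i
  | mul a b iha ihb => rintro (h | ⟨-, h | ⟨-, h⟩⟩) <;> simp_all

lemma mlt_asymm {a b : M d} (h : mlt a b) : ¬ mlt b a := by
  induction a generalizing b with
  | of i =>
      cases b with
      | of j => exact lt_asymm h
      | mul => exact id
  | mul a₁ a₂ ih₁ ih₂ =>
      cases b with
      | of => exact absurd h id
      | mul c e =>
          rcases h with h | ⟨he, h | ⟨rfl, h⟩⟩ <;> rintro (h' | ⟨he', h' | ⟨hc, h'⟩⟩)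
          all_goals first
            | omega | exact ih₁ h h' | exact ih₂ h h' | exact mlt_irrefl _ h'
            | (subst_vars; exact mlt_irrefl _ (by assumption))

lemma mlt_trichotomous (a b : M d) : mlt a b ∨ a = b ∨ mlt b a := by
  induction a generalizing b with
  | of i =>
      cases b with
      | of j => exact (lt_trichotomy i j).imp_right (Or.imp_left (congrArg _))
      | mul => exact Or.inl trivial
  | mul a₁ a₂ ih₁ ih₂ =>
      cases b with
      | of => exact Or.inr (Or.inr trivial)
      | mul c e =>
          rcases Nat.lt_trichotomy (leaves (a₁ * a₂)) (leaves (c * e)) with hl | hl | hl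
          · exact Or.inl (Or.inl hl)
          · rcases ih₁ c with h | rfl | h
            · exact Or.inl (Or.inr ⟨hl, Or.inl h⟩)
            · rcases ih₂ e with h | rfl | h
              · exact Or.inl (Or.inr ⟨hl, Or.inr ⟨rfl, h⟩⟩)
              · exact Or.inr (Or.inl rfl)
              · exact Or.inr (Or.inr (Or.inr ⟨hl.symm, Or.inr ⟨rfl, h⟩⟩))
            · exact Or.inr (Or.inr (Or.inr ⟨hl.symm, Or.inl h⟩))
          · exact Or.inr (Or.inr (Or.inl hl))

lemma mlt_of_not_mge {a b : M d} (h : ¬ mge a b) : mlt a b := by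
  rcases mlt_trichotomous a b with hab | rfl | hba
  · exact hab
  · exact absurd (Or.inr rfl) h
  · exact absurd (Or.inl hba) h

end Order

section Inversions

variable {α : Type*} (r : α → α → Prop)

def inversions : List α → ℕ
  | [] => 0
  | x :: t => t.countP (fun y => r x y) + inversions t

variable {r}

lemma inversions_swap_lt {x y : α} (hxy : r x y) (hyx : ¬ r y x) (l₁ l₂ : List α) :
    inversions r (l₁ ++ y :: x :: l₂) < inversions r (l₁ ++ x :: y :: l₂) := by
  induction l₁ with
  | nil => simp [inversions, hxy, hyx]; omega
  | cons a t ih =>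
      have hperm : (t ++ y :: x :: l₂).Perm (t ++ x :: y :: l₂) :=
        List.Perm.append_left t (List.Perm.swap _ _ _)
      simp only [List.cons_append, inversions, hperm.countP_eq]
      simpa only [List.cons_append] using Nat.add_lt_add_left ih _

end Inversions

section Braiding

variable (q : Fin (2 * d) → Fin (2 * d) → Kˣ)

lemma qT_mul_left (a b c : M d) : qT q (a * b) c = qT q a c * qT q b c := by
  simp [qT]

lemma qT_mul_right (a b c : M d) : qT q c (a * b) = qT q c a * qT q c b := by
  simp [qT, List.prod_map_mul]

lemma qT_of_of (i j : Fin (2 * d)) : qT q (.of i) (.of j) = q i j := by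
  simp [qT]

lemma qT_mul_qT_swap (hq2 : ∀ i j, q i j * q j i = 1) (a b : M d) :
    qT q a b * qT q b a = 1 := by
  induction a generalizing b with
  | of i =>
      induction b with
      | of j => rw [qT_of_of, qT_of_of, hq2]
      | mul b₁ b₂ ih₁ ih₂ =>
          rw [FreeMagma.mul_eq, qT_mul_right, qT_mul_left, mul_mul_mul_comm, ih₁, ih₂, mul_one]
  | mul a₁ a₂ ih₁ ih₂ =>
      rw [FreeMagma.mul_eq, qT_mul_left, qT_mul_right, mul_mul_mul_comm, ih₁, ih₂, mul_one]

lemma qT_self (hq1 : ∀ i, q i i = 1) (hq2 : ∀ i j, q i j * q j i = 1) (a : M d) :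
    qT q a a = 1 := by
  induction a with
  | of i => rw [qT_of_of, hq1]
  | mul a b iha ihb =>
      rw [FreeMagma.mul_eq, qT_mul_left, qT_mul_right, qT_mul_right, iha, ihb, one_mul, mul_one,
        qT_mul_qT_swap q hq2]

lemma qT_congr {a a' b b' : M d} (ha : (leafList a).Perm (leafList a'))
    (hb : (leafList b).Perm (leafList b')) : qT q a b = qT q a' b' := by
  unfold qT
  rw [(ha.map _).prod_eq]
  exact congrArg List.prod (List.map_congr_left fun i _ => (hb.map (q i)).prod_eq)

end Braiding

section Generators

variable (q : Fin (2 * d) → Fin (2 * d) → Kˣ)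

lemma hbar_mul_hbar (Γ Γ' : M d) :
    hbar q Γ * hbar q Γ' = (qT q Γ' Γ : K) • (hbar q Γ' * hbar q Γ) + hbar q (Γ * Γ') := by
  simpa [hbar] using RingQuot.mkAlgHom_rel K (Erel.rel (q := q) Γ Γ')

lemma hbar_mul_self (hq1 : ∀ i, q i i = 1) (hq2 : ∀ i j, q i j * q j i = 1) (Γ : M d) :
    hbar q (Γ * Γ) = 0 := by
  simpa [qT_self q hq1 hq2] using hbar_mul_hbar q Γ Γ

lemma hbar_mul_comm (hq2 : ∀ i j, q i j * q j i = 1) (Γ Γ' : M d) :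
    hbar q (Γ * Γ') = -(qT q Γ' Γ : K) • hbar q (Γ' * Γ) := by
  have h := hbar_mul_hbar q Γ Γ'
  rw [hbar_mul_hbar q Γ' Γ, smul_add, smul_smul, ← Units.val_mul, qT_mul_qT_swap q hq2,
    Units.val_one, one_smul, add_assoc, left_eq_add] at h
  exact (eq_neg_of_add_eq_zero_right h).trans (neg_smul _ _).symm

lemma hbar_mem_span_yplus (hq1 : ∀ i, q i i = 1) (hq2 : ∀ i j, q i j * q j i = 1) (Γ : M d) :
    hbar q Γ ∈ Submodule.span K (hbar q '' {Δ | Yplus Δ ∧ (leafList Δ).Perm (leafList Γ)}) := by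
  induction Γ with
  | of i => exact Submodule.subset_span ⟨_, ⟨Yplus.of i, .refl _⟩, rfl⟩
  | mul a b iha ihb =>
      rw [FreeMagma.mul_eq]
      let c : K := qT q b a
      let B : E q →ₗ[K] E q →ₗ[K] E q :=
        LinearMap.mul K (E q) + (-c) • (LinearMap.mul K (E q)).flip
      -- `qT` only sees the leaf multisets, so `B` also merges rearrangements of `a` and `b`.
      have hB : ∀ a' b' : M d, qT q b' a' = qT q b a →
          B (hbar q a') (hbar q b') = hbar q (a' * b') := by
        intro a' b' hc
        simp [B, c, hbar_mul_hbar q a' b', hc]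
      have hmem := Submodule.apply_mem_map₂ B iha ihb
      rw [hB a b rfl, Submodule.map₂_span_span] at hmem
      refine Submodule.span_le.2 ?_ hmem
      rintro _ ⟨_, ⟨Δa, ⟨hYa, hpa⟩, rfl⟩, _, ⟨Δb, ⟨hYb, hpb⟩, rfl⟩, rfl⟩
      change B _ _ ∈ Submodule.span K _
      rw [hB Δa Δb (qT_congr q hpb hpa)]
      have hperm : (leafList (Δa * Δb)).Perm (leafList (a * b)) := hpa.append hpb
      rcases mlt_trichotomous Δa Δb with h | rfl | h
      · exact Submodule.subset_span ⟨_, ⟨Yplus.mul hYa hYb h, hperm⟩, rfl⟩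
      · rw [hbar_mul_self q hq1 hq2]
        exact Submodule.zero_mem _
      · rw [hbar_mul_comm q hq2]
        exact Submodule.smul_mem _ _ <| Submodule.subset_span
          ⟨_, ⟨Yplus.mul hYb hYa h, List.perm_append_comm.trans hperm⟩, rfl⟩

end Generators

section Straightening

variable (q : Fin (2 * d) → Fin (2 * d) → Kˣ)

def orderedSpan (n : ℕ) : Submodule K (E q) :=
  Submodule.span K {x : E q | ∃ l : List (Yp d),
    DecChain l ∧ n ≤ degList (l.map (·.1)) ∧ x = (l.map fun Γ => hbar q Γ.1).prod}

lemma orderedSpan_antitone : Antitone (orderedSpan q) := fun _ _ h =>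
  Submodule.span_mono fun _ ⟨l, hl, hn, hx⟩ => ⟨l, hl, h.trans hn, hx⟩

@[simp] lemma degList_cons (Γ : M d) (l : List (M d)) :
    degList (Γ :: l) = (leaves Γ - 1) + degList l := by
  simp [degList]

@[simp] lemma degList_append (l₁ l₂ : List (M d)) :
    degList (l₁ ++ l₂) = degList l₁ + degList l₂ := by
  simp [degList]

lemma degList_perm {l₁ l₂ : List (M d)} (h : l₁.Perm l₂) : degList l₁ = degList l₂ :=
  (h.map _).sum_eq

lemma prod_hbar_append_cons_cons (l₁ l₂ : List (Yp d)) {x y z : Yp d} (hz : z.1 = x.1 * y.1) :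
    ((l₁ ++ x :: y :: l₂).map fun Γ => hbar q Γ.1).prod =
      (qT q y.1 x.1 : K) • ((l₁ ++ y :: x :: l₂).map fun Γ => hbar q Γ.1).prod +
        ((l₁ ++ z :: l₂).map fun Γ => hbar q Γ.1).prod := by
  simp only [List.map_append, List.map_cons, List.prod_append, List.prod_cons]
  rw [← mul_assoc (hbar q x.1), hbar_mul_hbar q x.1 y.1, hz]
  simp only [add_mul, mul_add, smul_mul_assoc, mul_smul_comm, mul_assoc]

lemma prod_hbar_mem_orderedSpan_of_yplus (l : List (Yp d)) :
    (l.map fun Γ => hbar q Γ.1).prod ∈ orderedSpan q (degList (l.map (·.1))) := by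
  by_cases hl : DecChain l
  · exact Submodule.subset_span ⟨l, hl, le_rfl, rfl⟩
  obtain ⟨x, y, l₁, l₂, rfl, hxy⟩ : ∃ x y l₁ l₂, l = l₁ ++ x :: y :: l₂ ∧ ¬ mge x.1 y.1 := by
    simpa using mt List.isChain_iff_forall_rel_of_append_cons_cons.2 hl
  have hlt := mlt_of_not_mge hxy
  let z : Yp d := ⟨x.1 * y.1, Yplus.mul x.2 y.2 hlt⟩
  rw [prod_hbar_append_cons_cons q l₁ l₂ (z := z) rfl]
  refine add_mem (Submodule.smul_mem _ _ ?_)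
    (orderedSpan_antitone q ?_ (prod_hbar_mem_orderedSpan_of_yplus (l₁ ++ z :: l₂)))
  · have hperm : ((l₁ ++ y :: x :: l₂).map (·.1)).Perm ((l₁ ++ x :: y :: l₂).map (·.1)) := by
      simpa using (List.Perm.swap x.1 y.1 _).append_left _
    have := prod_hbar_mem_orderedSpan_of_yplus (l₁ ++ y :: x :: l₂)
    rwa [degList_perm hperm] at this
  · have := leaves_pos x.1
    have := leaves_pos y.1
    simp only [List.map_append, List.map_cons, degList_append, degList_cons, leaves_mul, z]
    omega
termination_by (l.length, inversions (fun a b => mlt a.1 b.1) l)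
decreasing_by
  all_goals subst_vars; rw [Prod.lex_def]
  · exact .inr ⟨by simp,
      inversions_swap_lt (r := fun a b : Yp d => mlt a.1 b.1) hlt (mlt_asymm hlt) l₁ l₂⟩
  · exact .inl (by simp)

lemma prod_hbar_mem_orderedSpan (hq1 : ∀ i, q i i = 1) (hq2 : ∀ i j, q i j * q j i = 1)
    (l : List (M d)) : (l.map (hbar q)).prod ∈ orderedSpan q (degList l) := by
  induction l with
  | nil => exact Submodule.subset_span ⟨[], List.isChain_nil, by simp [degList], by simp⟩
  | cons Γ t ih =>
      have hmem := Submodule.mul_mem_mul (hbar_mem_span_yplus q hq1 hq2 Γ) ih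
      rw [orderedSpan, Submodule.span_mul_span] at hmem
      simp only [List.map_cons, List.prod_cons, degList_cons]
      refine Submodule.span_le.2 ?_ hmem
      rintro _ ⟨_, ⟨Δ, ⟨hY, hp⟩, rfl⟩, _, ⟨l, -, hl, rfl⟩, rfl⟩
      refine orderedSpan_antitone q ?_ (prod_hbar_mem_orderedSpan_of_yplus q (⟨Δ, hY⟩ :: l))
      simp only [List.map_cons, degList_cons, leaves_eq_of_perm hp]
      omega

lemma Ffil_eq_orderedSpan (hq1 : ∀ i, q i i = 1) (hq2 : ∀ i j, q i j * q j i = 1) (n : ℕ) :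
    Ffil q n = orderedSpan q n := by
  apply le_antisymm
  · refine Submodule.span_le.2 ?_
    rintro _ ⟨l, hn, rfl⟩
    exact orderedSpan_antitone q hn (prod_hbar_mem_orderedSpan q hq1 hq2 l)
  · refine Submodule.span_mono ?_
    rintro _ ⟨l, -, hn, rfl⟩
    exact ⟨l.map (·.1), hn, by simp⟩

lemma Ffil_mul_le (m n : ℕ) : Ffil q m * Ffil q n ≤ Ffil q (m + n) := by
  rw [Ffil, Ffil, Submodule.span_mul_span]
  refine Submodule.span_mono ?_
  rintro _ ⟨_, ⟨l, hl, rfl⟩, _, ⟨l', hl', rfl⟩, rfl⟩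
  exact ⟨l ++ l', by simp only [degList_append]; omega, by simp⟩

end Straightening

theorem statement2_general (d : ℕ) (K : Type*) [CommRing K]
    (q : Fin (2 * d) → Fin (2 * d) → Kˣ)
    (hq1 : ∀ i, q i i = 1) (hq2 : ∀ i j, q i j * q j i = 1) :
    (∀ n : ℕ, Ffil (K := K) q n =
        Submodule.span K {x : E (K := K) q | ∃ l : List (Yp d),
          DecChain l ∧ n ≤ degList (l.map (·.1)) ∧
            x = (l.map fun Γ => hbar q Γ.1).prod}) ∧
      (∀ m n : ℕ, ∀ x y : E (K := K) q,
        x ∈ Ffil (K := K) q m → y ∈ Ffil (K := K) q n →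
          x * y ∈ Ffil (K := K) q (m + n)) :=
  ⟨Ffil_eq_orderedSpan q hq1 hq2,
    fun m n _ _ hx hy => Ffil_mul_le q m n (Submodule.mul_mem_mul hx hy)⟩

/-- the filtration submodule `Fⁿ` is spanned by the ordered basis monomials of
degree at least `n`, and `F` is a decreasing algebra filtration: `Fᵐ·Fⁿ ⊆ F^{m+n}`. -/
theorem statement2 (d : ℕ) (hd : 1 ≤ d) (K : Type*) [CommRing K]
    (q : Fin (2 * d) → Fin (2 * d) → Kˣ)
    (hq1 : ∀ i, q i i = 1) (hq2 : ∀ i j, q i j * q j i = 1) :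
    (∀ n : ℕ, Ffil (K := K) q n =
        Submodule.span K {x : E (K := K) q | ∃ l : List (Yp d),
          DecChain l ∧ n ≤ degList (l.map (·.1)) ∧
            x = (l.map fun Γ => hbar q Γ.1).prod}) ∧
      (∀ m n : ℕ, ∀ x y : E (K := K) q,
        x ∈ Ffil (K := K) q m → y ∈ Ffil (K := K) q n →
          x * y ∈ Ffil (K := K) q (m + n)) :=
  statement2_general d K q hq1 hq2

end NC
end
end

section
/- Define a product ⋆ on A by f ⋆ g := φ⁻¹(φ(f)·φ(g)). Then for every N ≥ 1, every 1 ≤ m ≤ N, and all Γ₁, …, Γ_N ∈ Y⁺ with Γ₁ ⪰ … ⪰ Γ_m and Γ_{m+1} ⪰ … ⪰ Γ_N, one has (h_{Γ₁}⋯h_{Γ_m}) ⋆ (h_{Γ_{m+1}}⋯h_{Γ_N}) = h_{Γ₁} ⋆ h_{Γ₂} ⋆ … ⋆ h_{Γ_N} (the iterated, left-associated ⋆-product of the generators). -/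
/-!
Both factors on the left are ordered monomials, so `φ` sends them to `ℏ_{Γ₁}⋯ℏ_{Γ_m}` and
`ℏ_{Γ_{m+1}}⋯ℏ_{Γ_N}`. On the right, `φ` turns the iterated `⋆`-product into the plain product
`φ(h_{Γ₁})⋯φ(h_{Γ_N})` in `E`, and `φ(h_Γ) = ℏ_Γ` since one-letter words are ordered. Hence both
sides have image `ℏ_{Γ₁}⋯ℏ_{Γ_N}` under the bijection `φ`.
-/

open scoped Classical

noncomputable section

namespace NC

variable {d : ℕ} {K : Type*} [CommRing K]

def IsNormalQuantization (q : Fin (2 * d) → Fin (2 * d) → Kˣ) (φ : A (K := K) q ≃ₗ[K] E q) :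
    Prop :=
  ∀ l : List (Yp d), DecChain l → φ ((l.map (hA q)).prod) = (l.map fun Γ => hbar q Γ.1).prod

namespace IsNormalQuantization

variable {q : Fin (2 * d) → Fin (2 * d) → Kˣ} {φ : A (K := K) q ≃ₗ[K] E q}

theorem map_one (hφ : IsNormalQuantization q φ) : φ 1 = 1 := by
  simpa using hφ [] List.isChain_nil

theorem map_hA (hφ : IsNormalQuantization q φ) (Γ : Yp d) : φ (hA q Γ) = hbar q Γ.1 := by
  simpa using hφ [Γ] (List.isChain_singleton Γ)

theorem map_prod (hφ : IsNormalQuantization q φ) {l : List (Yp d)} (hl : DecChain l) :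
    φ ((l.map (hA q)).prod) = ((l.map (hA q)).map φ).prod := by
  rw [hφ l hl, List.map_map]
  exact congrArg List.prod (List.map_congr_left fun Γ _ => (hφ.map_hA Γ).symm)

end IsNormalQuantization

theorem map_foldl_transferMul {R A B : Type*} [Semiring R] [AddCommMonoid A] [Module R A]
    [Semiring B] [Module R B] (φ : A ≃ₗ[R] B) (l : List A) (x : A) :
    φ (l.foldl (fun a b => φ.symm (φ a * φ b)) x) = φ x * (l.map φ).prod := by
  induction l generalizing x with
  | nil => simp
  | cons a l ih =>
    simp only [List.foldl_cons, ih, LinearEquiv.apply_symm_apply, List.map_cons, List.prod_cons,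
      mul_assoc]

theorem decChain_take_ofFn {N : ℕ} (Γ : Fin N → Yp d) (m : ℕ)
    (h : ∀ i j : Fin N, (i : ℕ) + 1 = j → (j : ℕ) < m → mge (Γ i).1 (Γ j).1) :
    DecChain ((List.ofFn Γ).take m) := by
  refine List.isChain_iff_getElem.mpr fun i hi => ?_
  simp only [List.length_take, List.length_ofFn] at hi
  simpa using h ⟨i, by omega⟩ ⟨i + 1, by omega⟩ rfl (by simp only; omega)

theorem decChain_drop_ofFn {N : ℕ} (Γ : Fin N → Yp d) (m : ℕ)
    (h : ∀ i j : Fin N, (i : ℕ) + 1 = j → m ≤ (i : ℕ) → mge (Γ i).1 (Γ j).1) :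
    DecChain ((List.ofFn Γ).drop m) := by
  refine List.isChain_iff_getElem.mpr fun i hi => ?_
  simp only [List.length_drop, List.length_ofFn] at hi
  simpa [Nat.add_assoc] using h ⟨m + i, by omega⟩ ⟨m + i + 1, by omega⟩ rfl (by simp only; omega)

theorem statement4_general (d : ℕ) (K : Type*) [CommRing K]
    (q : Fin (2 * d) → Fin (2 * d) → Kˣ)
    (φ : A (K := K) q ≃ₗ[K] E (K := K) q)
    (hφ : ∀ l : List (Yp d), DecChain l →
      φ ((l.map (hA q)).prod) = (l.map fun Γ => hbar q Γ.1).prod)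
    (N m : ℕ) (Γ : Fin N → Yp d)
    (hdec : ∀ i j : Fin N, i ≤ j → ((j : ℕ) < m ∨ m ≤ (i : ℕ)) →
      mge (Γ i).1 (Γ j).1) :
    φ.symm (φ (((List.ofFn fun i => hA (K := K) q (Γ i)).take m).prod) *
        φ (((List.ofFn fun i => hA (K := K) q (Γ i)).drop m).prod)) =
      (List.ofFn fun i => hA (K := K) q (Γ i)).foldl
        (fun x y => φ.symm (φ x * φ y)) 1 := by
  have hφ' : IsNormalQuantization q φ := hφ
  have consecutive {i j : Fin N} (hij : (i : ℕ) + 1 = j) : i ≤ j :=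
    Fin.le_iff_val_le_val.2 (by omega)
  have hfirst := decChain_take_ofFn Γ m fun i j hij hj => hdec i j (consecutive hij) (.inl hj)
  have hsecond := decChain_drop_ofFn Γ m fun i j hij hi => hdec i j (consecutive hij) (.inr hi)
  have hgens : (List.ofFn fun i => hA q (Γ i)) = (List.ofFn Γ).map (hA q) :=
    (List.map_ofFn (f := Γ) (g := hA q)).symm
  rw [hgens, LinearEquiv.symm_apply_eq, map_foldl_transferMul, hφ'.map_one,
    one_mul, ← List.map_take, ← List.map_drop, hφ'.map_prod hfirst, hφ'.map_prod hsecond,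
    ← List.prod_append, ← List.map_append, ← List.map_append, List.take_append_drop]

/-- with `⋆` induced on the classical shadow via the normal quantization `φ`
(`f ⋆ g := φ⁻¹(φ f · φ g)`), the `⋆`-product of two ordered basis monomials equals the
iterated (left-associated) `⋆`-product of the generators. -/
theorem statement4 (d : ℕ) (hd : 1 ≤ d) (K : Type*) [CommRing K]
    (q : Fin (2 * d) → Fin (2 * d) → Kˣ)
    (hq1 : ∀ i, q i i = 1) (hq2 : ∀ i j, q i j * q j i = 1)
    (φ : A (K := K) q ≃ₗ[K] E (K := K) q)
    (hφ : ∀ l : List (Yp d), DecChain l →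
      φ ((l.map (hA q)).prod) = (l.map fun Γ => hbar q Γ.1).prod)
    (N m : ℕ) (hm : 1 ≤ m) (hmN : m ≤ N) (Γ : Fin N → Yp d)
    (hdec : ∀ i j : Fin N, i ≤ j → ((j : ℕ) < m ∨ m ≤ (i : ℕ)) →
      mge (Γ i).1 (Γ j).1) :
    φ.symm (φ (((List.ofFn fun i => hA (K := K) q (Γ i)).take m).prod) *
        φ (((List.ofFn fun i => hA (K := K) q (Γ i)).drop m).prod)) =
      (List.ofFn fun i => hA (K := K) q (Γ i)).foldl
        (fun x y => φ.symm (φ x * φ y)) 1 :=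
  statement4_general d K q φ hφ N m Γ hdec

end NC
end
end

section
/- For all σ, τ ∈ S_n, q_Q(σ∘τ) = q_Q(σ)·q_{Q^σ}(τ); in particular, taking τ = σ⁻¹, one gets q_Q(σ)⁻¹ = q_{Q^σ}(σ⁻¹). -/
/-!
Index the product by positions instead of values: `q_Q(σ)` is the product, over pairs `b < a`,
of `Q (σ a) (σ b)` taken only when `σ a < σ b`. For `σ * τ`, reindex the product for `σ` along
the bijection sending a pair `(a, b)` to `(τ a, τ b)` sorted (the bijection behind the
multiplicativity of `Equiv.Perm.signAux`). The identity then holds factor by factor: on pairs that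
`τ` keeps in order it is trivial, and on pairs that `τ` inverts it is `Q u v * Q v u = 1`.
-/

open scoped Classical

noncomputable section

namespace NC

/-- The cocycle `q_Q(σ)` attached to a map `Q : Fin n → Fin n → G` and a permutation `σ`:
the product of `Q i j` over all pairs `i < j` inverted by `σ⁻¹`. -/
def qQ {G : Type*} [CommGroup G] {n : ℕ} (Q : Fin n → Fin n → G)
    (σ : Equiv.Perm (Fin n)) : G :=
  ∏ p ∈ Finset.univ.filter
      (fun p : Fin n × Fin n => p.1 < p.2 ∧ σ.symm p.2 < σ.symm p.1),
    Q p.1 p.2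

open Equiv Finset

theorem prod_finPairsLT_signBijAux {M : Type*} [CommMonoid M] {n : ℕ} (τ : Perm (Fin n))
    (f : (Σ _ : Fin n, Fin n) → M) :
    ∏ x ∈ Perm.finPairsLT n, f (Perm.signBijAux τ x) = ∏ x ∈ Perm.finPairsLT n, f x :=
  prod_nbij _ Perm.signBijAux_mem Perm.signBijAux_injOn Perm.signBijAux_surj fun _ _ => rfl

section

variable {G : Type*} [CommGroup G] {n : ℕ} (Q : Fin n → Fin n → G)

def ascFactor (u v : Fin n) : G := if u < v then Q u v else 1

theorem ascFactor_eq_mul_ascFactor (hQ : ∀ i j, Q i j * Q j i = 1) {u v : Fin n}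
    (huv : u ≠ v) : ascFactor Q u v = Q u v * ascFactor Q v u := by
  rcases huv.lt_or_gt with h | h
  · simp [ascFactor, h, h.not_gt]
  · simp [ascFactor, h, h.not_gt, hQ]

theorem qQ_eq_prod_finPairsLT (σ : Perm (Fin n)) :
    qQ Q σ = ∏ x ∈ Perm.finPairsLT n, ascFactor Q (σ x.1) (σ x.2) := by
  simp only [qQ, ascFactor, ← prod_filter]
  refine prod_nbij' (fun p => ⟨σ.symm p.1, σ.symm p.2⟩) (fun x => (σ x.1, σ x.2))
    ?_ ?_ ?_ ?_ ?_ <;> simp +contextual [Perm.mem_finPairsLT]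

end

section

variable {G : Type*} [CommGroup G] {n : ℕ} {Q : Fin n → Fin n → G}

theorem qQ_mul (hQ : ∀ i j, Q i j * Q j i = 1) (σ τ : Perm (Fin n)) :
    qQ Q (σ * τ) = qQ Q σ * qQ (fun i j => Q (σ i) (σ j)) τ := by
  simp only [qQ_eq_prod_finPairsLT]
  rw [← prod_finPairsLT_signBijAux τ (fun x => ascFactor Q (σ x.1) (σ x.2)),
    ← prod_mul_distrib]
  refine prod_congr rfl fun ⟨a, b⟩ hab => ?_
  have hne : τ a ≠ τ b := τ.injective.ne (Perm.mem_finPairsLT.1 hab).ne'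
  simp only [Perm.signBijAux, Perm.mul_apply]
  split_ifs with h
  · simp [ascFactor, h.not_gt]
  · have hlt : τ a < τ b := (not_lt.1 h).lt_of_ne hne
    rw [ascFactor_eq_mul_ascFactor Q hQ (σ.injective.ne hne), mul_comm]
    simp [ascFactor, hlt]

theorem qQ_one : qQ Q 1 = 1 :=
  prod_eq_one fun _ hp => absurd (mem_filter.1 hp).2 fun h => h.1.not_gt h.2

theorem qQ_inv (hQ : ∀ i j, Q i j * Q j i = 1) (σ : Perm (Fin n)) :
    (qQ Q σ)⁻¹ = qQ (fun i j => Q (σ i) (σ j)) σ⁻¹ := by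
  refine inv_eq_of_mul_eq_one_right ?_
  rw [← qQ_mul hQ, mul_inv_cancel, qQ_one]

end

theorem statement10_general {G : Type*} [CommGroup G] (n : ℕ)
    (Q : Fin n → Fin n → G) (hQ : ∀ i j, Q i j * Q j i = 1)
    (σ τ : Equiv.Perm (Fin n)) :
    qQ Q (σ * τ) = qQ Q σ * qQ (fun i j => Q (σ i) (σ j)) τ ∧
      (qQ Q σ)⁻¹ = qQ (fun i j => Q (σ i) (σ j)) σ⁻¹ :=
  ⟨qQ_mul hQ σ τ, qQ_inv hQ σ⟩

/-- `q_Q(σ∘τ) = q_Q(σ)·q_{Q^σ}(τ)`, and in particular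
`q_Q(σ)⁻¹ = q_{Q^σ}(σ⁻¹)`. -/
theorem statement10 {G : Type*} [CommGroup G] (n : ℕ) (hn : 1 ≤ n)
    (Q : Fin n → Fin n → G) (hQ : ∀ i j, Q i j * Q j i = 1)
    (σ τ : Equiv.Perm (Fin n)) :
    qQ Q (σ * τ) = qQ Q σ * qQ (fun i j => Q (σ i) (σ j)) τ ∧
      (qQ Q σ)⁻¹ = qQ (fun i j => Q (σ i) (σ j)) σ⁻¹ :=
  statement10_general n Q hQ σ τ

end NC
end
end
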